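/- arXiv:2202.05925 — 5 statements merged into one kernel-verified Lean document; each statement's English description precedes it below -/
import Mathlib

section
/- For n ≥ 0 and x an integer, the basis function φ_n(x;α) = (q^{-x};q)_n / (q^{α-x};q)_n satisfies X φ_n(x;α) = -[n]_q φ_{n+1}(x;α) + [n-α]_q φ_n(x;α), where X f(x) = [x-α]_q f(x) - q^{-α}[x]_q f(x-1). -/
open Finset

noncomputable def qnum (q y : ℝ) : ℝ := (1 - q ^ y) / (1 - q)

noncomputable def qPoch (a q : ℝ) (n : ℕ) : ℝ := ∏ j ∈ Finset.range n, (1 - a * q ^ j)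

noncomputable def phi (q α : ℝ) (n : ℕ) (x : ℤ) : ℝ :=
  qPoch (q ^ (-(x : ℝ))) q n / qPoch (q ^ (α - (x : ℝ))) q n

lemma qPoch_succ (a q : ℝ) (n : ℕ) : qPoch a q (n+1) = qPoch a q n * (1 - a * q ^ n) := by
  simp [qPoch, Finset.prod_range_succ]

lemma qPoch_shift (a q : ℝ) (n : ℕ) :
    (1 - a) * qPoch (a * q) q n = qPoch a q (n + 1) := by
  induction n with
  | zero => simp [qPoch]
  | succ n ih =>
    rw [qPoch_succ, qPoch_succ a q (n+1), ← ih]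
    ring

lemma key (q a b c N D P Q : ℝ) (ha : a ≠ 0) (hb : b ≠ 0) (h1q : 1 - q ≠ 0)
    (hD : D ≠ 0) (hQ : Q ≠ 0) (hb1 : 1 - b ≠ 0) (hbn : 1 - b * c ≠ 0)
    (h1 : (1 - a) * P = N * (1 - a * c)) (h2 : (1 - b) * Q = D * (1 - b * c)) :
    (1 - b⁻¹) / (1 - q) * (N / D) - a * b⁻¹ * ((1 - a⁻¹) / (1 - q)) * (P / Q)
      = -((1 - c) / (1 - q)) * (N * (1 - a * c) / (D * (1 - b * c)))
        + (1 - c * (a * b⁻¹)) / (1 - q) * (N / D) := by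
  have e1 : a * b⁻¹ * ((1 - a⁻¹) / (1 - q)) * (P / Q)
      = -(b⁻¹) * (N * (1 - a * c)) / ((1 - q) * Q) := by
    rw [← h1]
    field_simp
    ring
  have e2 : Q = D * (1 - b * c) / (1 - b) := by
    rw [eq_div_iff hb1]; linear_combination h2
  rw [e1, e2]
  field_simp
  ring

/-- `X φ_n(x;α) = -[n]_q φ_{n+1}(x;α) + [n-α]_q φ_n(x;α)`, where
`X f(x) = [x-α]_q f(x) - q^{-α}[x]_q f(x-1)`. -/
theorem X_on_phi (q α : ℝ) (hq : 0 < q) (hq1 : q ≠ 1)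
    (hgen : ∀ (x : ℤ) (k : ℕ), qPoch (q ^ (α - (x : ℝ))) q k ≠ 0)
    (n : ℕ) (x : ℤ) :
    qnum q ((x : ℝ) - α) * phi q α n x - q ^ (-α) * qnum q (x : ℝ) * phi q α n (x - 1) =
      -(qnum q (n : ℝ)) * phi q α (n + 1) x + qnum q ((n : ℝ) - α) * phi q α n x := by
  have h1q : (1:ℝ) - q ≠ 0 := sub_ne_zero.mpr (fun h => hq1 h.symm)
  have ha0 : q ^ (-(x:ℝ)) ≠ 0 := (Real.rpow_pos_of_pos hq _).ne'
  have hb0 : q ^ (α - (x:ℝ)) ≠ 0 := (Real.rpow_pos_of_pos hq _).ne'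
  have hx1a : q ^ (-(((x - 1 : ℤ)) : ℝ)) = q ^ (-(x:ℝ)) * q := by
    rw [show (-(((x-1:ℤ)):ℝ)) = (-(x:ℝ)) + 1 by push_cast; ring, Real.rpow_add hq,
      Real.rpow_one]
  have hx1b : q ^ (α - (((x - 1 : ℤ)) : ℝ)) = q ^ (α - (x:ℝ)) * q := by
    rw [show (α - (((x-1:ℤ)):ℝ)) = (α - (x:ℝ)) + 1 by push_cast; ring, Real.rpow_add hq,
      Real.rpow_one]
  have exα : q ^ ((x:ℝ) - α) = (q ^ (α - (x:ℝ)))⁻¹ := by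
    rw [show (x:ℝ) - α = -(α - (x:ℝ)) by ring, Real.rpow_neg hq.le]
  have ex : q ^ ((x:ℝ)) = (q ^ (-(x:ℝ)))⁻¹ := by
    rw [Real.rpow_neg hq.le, inv_inv]
  have eα : q ^ (-α) = q ^ (-(x:ℝ)) * (q ^ (α - (x:ℝ)))⁻¹ := by
    rw [← exα, ← Real.rpow_add hq]; congr 1; ring
  have enα : q ^ ((n:ℝ) - α) = q ^ n * (q ^ (-(x:ℝ)) * (q ^ (α - (x:ℝ)))⁻¹) := by
    rw [← eα, ← Real.rpow_natCast q n, ← Real.rpow_add hq, sub_eq_add_neg]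
  have en : q ^ ((n:ℝ)) = q ^ n := Real.rpow_natCast q n
  simp only [phi, qnum, hx1a, hx1b, exα, ex, eα, enα, en, qPoch_succ]
  set a := q ^ (-(x:ℝ)) with hadef
  set b := q ^ (α - (x:ℝ)) with hbdef
  have hD : qPoch b q n ≠ 0 := hgen x n
  have hD1 : qPoch b q (n+1) ≠ 0 := hgen x (n+1)
  have hb1 : (1:ℝ) - b ≠ 0 := by
    have h := hgen x 1
    simpa [qPoch] using h
  have hbn : (1:ℝ) - b * q ^ n ≠ 0 := by
    rw [qPoch_succ] at hD1
    exact right_ne_zero_of_mul hD1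
  have hQ : qPoch (b * q) q n ≠ 0 := by
    have h := hgen (x-1) n
    rwa [hx1b] at h
  exact key q a b (q ^ n) (qPoch a q n) (qPoch b q n) (qPoch (a*q) q n) (qPoch (b*q) q n)
    ha0 hb0 h1q hD hQ hb1 hbn (by rw [qPoch_shift, qPoch_succ]) (by rw [qPoch_shift, qPoch_succ])
end

section
/- For 0 ≤ k < n ≤ N, the quantity -q^{-n}[n]_q[n+β-N]_q + q^{-k}[k]_q[k+β-N]_q is nonzero when q is not a root of unity and β is generic; equivalently the eigenvalues λ_n = [-n]_q[n+β-N]_q for 0 ≤ n ≤ N are pairwise distinct. -/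
lemma rpow_inj_aux {q : ℝ} (hq : 0 < q) (hq1 : q ≠ 1) {a b : ℝ}
    (h : q ^ a = q ^ b) : a = b := by
  rw [Real.rpow_def_of_pos hq, Real.rpow_def_of_pos hq] at h
  have hlog : Real.log q ≠ 0 := by
    intro h0
    rcases Real.log_eq_zero.mp h0 with h | h | h <;> [exact absurd h (ne_of_gt hq); exact hq1 h; linarith]
  have := Real.exp_injective h
  exact mul_left_cancel₀ hlog this

/-- for generic `β` the eigenvalues `λ_n = [-n]_q [n+β-N]_q`, `0 ≤ n ≤ N`,
are pairwise distinct; equivalently `-q^{-n}[n]_q[n+β-N]_q + q^{-k}[k]_q[k+β-N]_q ≠ 0`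
for `0 ≤ k < n ≤ N`. -/
theorem eigenvalues_distinct (q β : ℝ) (N : ℕ) (hq : 0 < q) (hq1 : q ≠ 1) (hN : 0 < N)
    (hβ : ∀ m : ℤ, -(N : ℤ) ≤ m → m ≤ N → q ^ β ≠ q ^ (m : ℝ)) :
    ∀ n k : ℕ, k < n → n ≤ N →
      (qnum q (-(n : ℝ)) * qnum q ((n : ℝ) + β - N) ≠
        qnum q (-(k : ℝ)) * qnum q ((k : ℝ) + β - N)) ∧
      (-(q ^ (-(n : ℝ)) * qnum q (n : ℝ) * qnum q ((n : ℝ) + β - N)) +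
          q ^ (-(k : ℝ)) * qnum q (k : ℝ) * qnum q ((k : ℝ) + β - N) ≠ 0) := by
  intro n k hkn hnN
  have hq0 : q ≠ 0 := ne_of_gt hq
  have h1q : (1 : ℝ) - q ≠ 0 := sub_ne_zero.mpr (Ne.symm hq1)
  set P := q ^ (n : ℝ) with hP
  set K := q ^ (k : ℝ) with hK
  set S := q ^ β with hS
  set T := q ^ (N : ℝ) with hT
  have hP0 : P ≠ 0 := ne_of_gt (Real.rpow_pos_of_pos hq _)
  have hK0 : K ≠ 0 := ne_of_gt (Real.rpow_pos_of_pos hq _)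
  have hS0 : S ≠ 0 := ne_of_gt (Real.rpow_pos_of_pos hq _)
  have hT0 : T ≠ 0 := ne_of_gt (Real.rpow_pos_of_pos hq _)
  have hA : q ^ (-(n : ℝ)) = P⁻¹ := by rw [Real.rpow_neg hq.le, hP]
  have hC : q ^ (-(k : ℝ)) = K⁻¹ := by rw [Real.rpow_neg hq.le, hK]
  have hB : q ^ ((n : ℝ) + β - N) = P * S / T := by
    rw [sub_eq_add_neg, Real.rpow_add hq, Real.rpow_add hq, Real.rpow_neg hq.le, ← hP, ← hS, ← hT]
    ring
  have hD : q ^ ((k : ℝ) + β - N) = K * S / T := by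
    rw [sub_eq_add_neg, Real.rpow_add hq, Real.rpow_add hq, Real.rpow_neg hq.le, ← hK, ← hS, ← hT]
    ring
  have hPK : P ≠ K := by
    intro h
    have := rpow_inj_aux hq hq1 h
    have : (n : ℝ) = (k : ℝ) := this
    have : n = k := Nat.cast_injective this
    omega
  have hTPK : T ≠ P * K * S := by
    intro h
    have hm : S = q ^ (((N : ℤ) - n - k : ℤ) : ℝ) := by
      have hcast : (((N : ℤ) - n - k : ℤ) : ℝ) = (N : ℝ) - n - k := by push_cast; ring
      rw [hcast, sub_eq_add_neg, sub_eq_add_neg, Real.rpow_add hq, Real.rpow_add hq,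
        Real.rpow_neg hq.le, Real.rpow_neg hq.le, ← hP, ← hK, ← hT, h]
      field_simp
    exact hβ ((N : ℤ) - n - k) (by omega) (by omega) hm
  have key : qnum q (-(n : ℝ)) * qnum q ((n : ℝ) + β - N) -
      qnum q (-(k : ℝ)) * qnum q ((k : ℝ) + β - N)
      = (P - K) * (T - P * K * S) / (P * K * T * (1 - q) ^ 2) := by
    unfold qnum
    rw [hA, hB, hC, hD]
    field_simp
    ring
  have hne : qnum q (-(n : ℝ)) * qnum q ((n : ℝ) + β - N) -
      qnum q (-(k : ℝ)) * qnum q ((k : ℝ) + β - N) ≠ 0 := by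
    rw [key]
    exact div_ne_zero (mul_ne_zero (sub_ne_zero.mpr hPK) (fun h => hTPK (sub_eq_zero.mp h)))
      (mul_ne_zero (mul_ne_zero (mul_ne_zero hP0 hK0) hT0) (pow_ne_zero 2 h1q))
  refine ⟨sub_ne_zero.mp hne, ?_⟩
  have e2 : -(q ^ (-(n : ℝ)) * qnum q (n : ℝ) * qnum q ((n : ℝ) + β - N)) +
      q ^ (-(k : ℝ)) * qnum q (k : ℝ) * qnum q ((k : ℝ) + β - N)
      = qnum q (-(n : ℝ)) * qnum q ((n : ℝ) + β - N) -
          qnum q (-(k : ℝ)) * qnum q ((k : ℝ) + β - N) := by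
    unfold qnum
    rw [hA, hB, hC, hD, ← hP, ← hK]
    field_simp
    ring
  rw [e2]
  exact hne
end

section
/- The q-hypergeometric weight w_x^{(α,β)} is invariant under the involution S that simultaneously replaces α by β-α+2, x by N-x, and q by q^{-1}: w_{N-x}^{(β-α+2,β)} with base q^{-1} equals w_x^{(α,β)} with base q. -/
open Finset

/-- The q-hypergeometric (q-Hahn) weight `w_x^{(α,β)}` with base `q`. -/
noncomputable def qHahnWeight (q α β : ℝ) (N x : ℕ) : ℝ :=
  q ^ ((1 - α) * N) * (qPoch (q ^ (α - β - 1)) q N / qPoch (q ^ (-β)) q N) *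
    q ^ ((β + 1) * x) *
    (qPoch (q ^ (-(N : ℝ))) q x * qPoch (q ^ (1 - α)) q x /
      (qPoch q q x * qPoch (q ^ (β - α - (N : ℝ) + 2)) q x))

/-!
With `u = q ^ (1 - α)` and `v = q ^ (α - β - 1)` the weight is a rational function of `q, u, v`,
and the involution becomes `(q, u, v, x) ↦ (q⁻¹, v⁻¹, u⁻¹, N - x)`. Writing `N = x + m`, reversing
the symbols `(q^{-N}; q)_x` and `(q^{1-N}/v; q)_x` and splitting `(v; q)_N` and `(q; q)_N` brings
the weight to the q-binomial form `u^m [N choose x]_q (u; q)_x (v; q)_m / (uv; q)_N`. Inverting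
the base, `(a⁻¹; q⁻¹)_n = (-1)^n a^{-n} q^{-n(n-1)/2} (a; q)_n`, shows that this form is invariant
under `(q, u, v, x, m) ↦ (q⁻¹, v⁻¹, u⁻¹, m, x)`.
-/

theorem qPoch_add (a q : ℝ) (m n : ℕ) :
    qPoch a q (m + n) = qPoch a q m * qPoch (a * q ^ m) q n := by
  simp only [qPoch, prod_range_add, pow_add, mul_assoc]

theorem prod_range_pow_eq_pow_choose_two (q : ℝ) (n : ℕ) :
    ∏ j ∈ range n, q ^ j = q ^ n.choose 2 := by
  rw [prod_pow_eq_pow_sum, sum_range_id, Nat.choose_two_right]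

theorem qPoch_inv {a q : ℝ} (ha : a ≠ 0) (hq : q ≠ 0) (n : ℕ) :
    qPoch a⁻¹ q⁻¹ n = (-1) ^ n * (a ^ n * q ^ n.choose 2)⁻¹ * qPoch a q n := by
  have factor (j : ℕ) : 1 - a⁻¹ * q⁻¹ ^ j = -1 * (a * q ^ j)⁻¹ * (1 - a * q ^ j) := by
    rw [inv_pow]
    field_simp
    ring
  rw [qPoch, qPoch, prod_congr rfl fun j _ ↦ factor j]
  simp only [prod_mul_distrib, prod_const, card_range, prod_inv_distrib,
    prod_range_pow_eq_pow_choose_two]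

theorem qPoch_inv_eq_zero_iff {a q : ℝ} (ha : a ≠ 0) (hq : q ≠ 0) (n : ℕ) :
    qPoch a⁻¹ q⁻¹ n = 0 ↔ qPoch a q n = 0 := by
  simp [qPoch_inv ha hq, ha, hq]

theorem qPoch_reverse {a q : ℝ} (ha : a ≠ 0) (hq : q ≠ 0) (n : ℕ) :
    qPoch a q n = (-1) ^ n * a ^ n * q ^ n.choose 2 * qPoch (q / (a * q ^ n)) q n := by
  have factor : ∀ j ∈ range n,
      1 - q / (a * q ^ n) * q ^ (n - 1 - j) = -1 * (a * q ^ j)⁻¹ * (1 - a * q ^ j) := by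
    intro j hj
    have hpow : q * q ^ (n - 1 - j) * q ^ j = q ^ n := by
      rw [← pow_succ', ← pow_add]
      congr 1
      have := mem_range.1 hj
      omega
    have hterm : q / (a * q ^ n) * q ^ (n - 1 - j) = (a * q ^ j)⁻¹ := by
      rw [← hpow]
      field_simp
    rw [hterm]
    field_simp
    ring
  rw [qPoch, qPoch, ← prod_range_reflect (fun j ↦ 1 - q / (a * q ^ n) * q ^ j),
    prod_congr rfl factor]
  simp only [prod_mul_distrib, prod_const, card_range, prod_inv_distrib,
    prod_range_pow_eq_pow_choose_two]
  field_simp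
  rw [pow_right_comm, neg_one_sq, one_pow, mul_one]

noncomputable def qHahnWeightUV (q u v : ℝ) (N x : ℕ) : ℝ :=
  u ^ N * (qPoch v q N / qPoch (u * v) q N) * (q / (u * v)) ^ x *
    (qPoch (q ^ N)⁻¹ q x * qPoch u q x / (qPoch q q x * qPoch (q / (v * q ^ N)) q x))

theorem rpow_sub_sub_add_two {q : ℝ} (hq : 0 < q) (α β : ℝ) (N : ℕ) :
    q ^ (β - α - (N : ℝ) + 2) = q / (q ^ (α - β - 1) * q ^ N) := by
  rw [show β - α - (N : ℝ) + 2 = 1 - (α - β - 1 + N) by ring, Real.rpow_sub hq, Real.rpow_one,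
    Real.rpow_add hq, Real.rpow_natCast]

theorem qHahnWeight_eq_qHahnWeightUV {q : ℝ} (hq : 0 < q) (α β : ℝ) (N x : ℕ) :
    qHahnWeight q α β N x = qHahnWeightUV q (q ^ (1 - α)) (q ^ (α - β - 1)) N x := by
  have hprod : q ^ (-β) = q ^ (1 - α) * q ^ (α - β - 1) := by
    rw [← Real.rpow_add hq]
    ring_nf
  have hβ : q ^ ((β + 1) * x) = (q / (q ^ (1 - α) * q ^ (α - β - 1))) ^ x := by
    rw [← hprod, Real.rpow_mul_natCast hq.le, Real.rpow_add hq, Real.rpow_one,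
      Real.rpow_neg hq.le, div_inv_eq_mul, mul_comm]
  rw [qHahnWeight, qHahnWeightUV, Real.rpow_mul_natCast hq.le, hprod, hβ, Real.rpow_neg hq.le,
    Real.rpow_natCast, rpow_sub_sub_add_two hq]

noncomputable def qBinomialWeight (q u v : ℝ) (x m : ℕ) : ℝ :=
  u ^ m * qPoch u q x * qPoch v q m * qPoch q q (x + m) /
    (qPoch q q x * qPoch q q m * qPoch (u * v) q (x + m))

theorem qHahnWeightUV_eq_qBinomialWeight {q u v : ℝ} {x m : ℕ} (hq : q ≠ 0) (hu : u ≠ 0)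
    (hv : v ≠ 0) (hm : qPoch q q m ≠ 0) (hlow : qPoch (q / (v * q ^ (x + m))) q x ≠ 0) :
    qHahnWeightUV q u v (x + m) x = qBinomialWeight q u v x m := by
  have hv_split : qPoch v q (x + m) = qPoch v q m * qPoch (v * q ^ m) q x := by
    rw [add_comm, qPoch_add]
  have hq_split : qPoch q q (x + m) = qPoch q q m * qPoch (q ^ (m + 1)) q x := by
    rw [add_comm, qPoch_add, ← pow_succ']
  have hv_rev : qPoch (v * q ^ m) q x
      = (-1) ^ x * (v * q ^ m) ^ x * q ^ x.choose 2 * qPoch (q / (v * q ^ (x + m))) q x := by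
    rw [qPoch_reverse (by positivity) hq, mul_assoc v, ← pow_add, add_comm m]
  have hq_rev : qPoch (q ^ (m + 1)) q x
      = (-1) ^ x * (q ^ (m + 1)) ^ x * q ^ x.choose 2 * qPoch (q ^ (x + m))⁻¹ q x := by
    rw [qPoch_reverse (by positivity) hq, ← pow_add]
    congr 2
    field_simp
    ring
  rw [qHahnWeightUV, qBinomialWeight, hv_split, hv_rev, hq_split, hq_rev, div_pow, mul_pow]
  field_simp
  ring

theorem qBinomialWeight_involution {q u v : ℝ} (hq : q ≠ 0) (hu : u ≠ 0) (hv : v ≠ 0)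
    (x m : ℕ) :
    qBinomialWeight q⁻¹ v⁻¹ u⁻¹ m x = qBinomialWeight q u v x m := by
  rw [qBinomialWeight, qBinomialWeight, ← mul_inv_rev, qPoch_inv hv hq, qPoch_inv hu hq,
    qPoch_inv hq hq, qPoch_inv hq hq, qPoch_inv hq hq, qPoch_inv (mul_ne_zero hu hv) hq]
  have hscalar : (v ^ x)⁻¹ * ((-1) ^ m * (v ^ m * q ^ m.choose 2)⁻¹) *
      ((-1) ^ x * (u ^ x * q ^ x.choose 2)⁻¹) *
      ((-1) ^ (m + x) * (q ^ (m + x) * q ^ (m + x).choose 2)⁻¹) /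
      ((-1) ^ m * (q ^ m * q ^ m.choose 2)⁻¹ * ((-1) ^ x * (q ^ x * q ^ x.choose 2)⁻¹) *
        ((-1) ^ (m + x) * ((u * v) ^ (m + x) * q ^ (m + x).choose 2)⁻¹)) = u ^ m := by
    field_simp
    ring
  rw [add_comm m x] at hscalar ⊢
  linear_combination (qPoch u q x * qPoch v q m * qPoch q q (x + m) /
    (qPoch q q x * qPoch q q m * qPoch (u * v) q (x + m))) * hscalar

theorem qHahnWeight_involution_general (q α β : ℝ) (N x : ℕ) (hq : 0 < q)
    (hx : x ≤ N)
    (h2 : qPoch q q x ≠ 0)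
    (h3 : qPoch (q ^ (β - α - (N : ℝ) + 2)) q x ≠ 0)
    (h5 : qPoch q⁻¹ q⁻¹ (N - x) ≠ 0)
    (h6 : qPoch (q⁻¹ ^ (β - (β - α + 2) - (N : ℝ) + 2)) q⁻¹ (N - x) ≠ 0) :
    qHahnWeight q⁻¹ (β - α + 2) β N (N - x) = qHahnWeight q α β N x := by
  obtain ⟨m, rfl⟩ := Nat.exists_eq_add_of_le hx
  rw [Nat.add_sub_cancel_left] at h5 h6 ⊢
  have hq' : 0 < q⁻¹ := inv_pos.2 hq
  set u := q ^ (1 - α)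
  set v := q ^ (α - β - 1)
  have hu : u ≠ 0 := (Real.rpow_pos_of_pos hq _).ne'
  have hv : v ≠ 0 := (Real.rpow_pos_of_pos hq _).ne'
  have hSu : q⁻¹ ^ (1 - (β - α + 2)) = v⁻¹ := by
    rw [Real.inv_rpow hq.le, show 1 - (β - α + 2) = α - β - 1 by ring]
  have hSv : q⁻¹ ^ (β - α + 2 - β - 1) = u⁻¹ := by
    rw [Real.inv_rpow hq.le, show β - α + 2 - β - 1 = 1 - α by ring]
  rw [rpow_sub_sub_add_two hq] at h3
  rw [rpow_sub_sub_add_two hq', hSv] at h6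
  calc qHahnWeight q⁻¹ (β - α + 2) β (x + m) m
      = qHahnWeightUV q⁻¹ v⁻¹ u⁻¹ (m + x) m := by
        rw [qHahnWeight_eq_qHahnWeightUV hq', hSu, hSv, add_comm]
    _ = qBinomialWeight q⁻¹ v⁻¹ u⁻¹ m x :=
        qHahnWeightUV_eq_qBinomialWeight (inv_ne_zero hq.ne') (inv_ne_zero hv) (inv_ne_zero hu)
          ((qPoch_inv_eq_zero_iff hq.ne' hq.ne' x).not.2 h2) (by rwa [add_comm])
    _ = qBinomialWeight q u v x m := qBinomialWeight_involution hq.ne' hu hv x m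
    _ = qHahnWeightUV q u v (x + m) x :=
        (qHahnWeightUV_eq_qBinomialWeight hq.ne' hu hv
          ((qPoch_inv_eq_zero_iff hq.ne' hq.ne' m).not.1 h5) h3).symm
    _ = qHahnWeight q α β (x + m) x := (qHahnWeight_eq_qHahnWeightUV hq α β _ x).symm

/-- the weight is invariant under the involution
`S : α ↦ β - α + 2, x ↦ N - x, q ↦ q⁻¹`. -/
theorem qHahnWeight_involution (q α β : ℝ) (N x : ℕ) (hq : 0 < q) (hq1 : q ≠ 1)
    (hN : 0 < N) (hx : x ≤ N)
    (h1 : qPoch (q ^ (-β)) q N ≠ 0)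
    (h2 : qPoch q q x ≠ 0)
    (h3 : qPoch (q ^ (β - α - (N : ℝ) + 2)) q x ≠ 0)
    (h4 : qPoch (q⁻¹ ^ (-β)) q⁻¹ N ≠ 0)
    (h5 : qPoch q⁻¹ q⁻¹ (N - x) ≠ 0)
    (h6 : qPoch (q⁻¹ ^ (β - (β - α + 2) - (N : ℝ) + 2)) q⁻¹ (N - x) ≠ 0) :
    qHahnWeight q⁻¹ (β - α + 2) β N (N - x) = qHahnWeight q α β N x :=
  qHahnWeight_involution_general q α β N x hq hx h2 h3 h5 h6
end

section
/- The operator X shifts the parameter α in U_n: X^{(α,β)} U_n(x;α,β,N;q) = [-α]_q · U_n(x;α+1,β,N;q), where X^{(α,β)} f(x) = [x-α]_q f(x) - q^{-α}[x]_q f(x-1). -/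
open Finset

noncomputable def Ufun (q α β : ℝ) (N n : ℕ) (x : ℝ) : ℝ :=
  (qPoch (q ^ (-(N : ℝ))) q n / qPoch (q ^ (-(n : ℝ) - β)) q n) *
    ∑ k ∈ Finset.range (n + 1),
      qPoch (q ^ (-(n : ℝ))) q k * qPoch (q ^ ((n : ℝ) + β - N)) q k *
        qPoch (q ^ (-x)) q k * q ^ ((k : ℝ) * (α - β)) /
        (qPoch q q k * qPoch (q ^ (-(N : ℝ))) q k * qPoch (q ^ (α - x)) q k)

lemma rpow_ne_one' {q : ℝ} (hq : 0 < q) (hq1 : q ≠ 1) {y : ℝ} (hy : y ≠ 0) : q ^ y ≠ 1 := by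
  intro h
  have hl : Real.log (q ^ y) = y * Real.log q := Real.log_rpow hq y
  rw [h, Real.log_one] at hl
  have : Real.log q ≠ 0 := by
    rw [Ne, Real.log_eq_zero]; push_neg
    exact ⟨hq.ne', hq1, by linarith⟩
  have := mul_eq_zero.mp hl.symm
  tauto

lemma poch_shift (a q : ℝ) (k : ℕ) :
    (1 - a) * qPoch (a * q) q k = qPoch a q k * (1 - a * q ^ k) := by
  unfold qPoch
  rw [← Finset.prod_range_succ]
  rw [Finset.prod_range_succ' (fun j => (1 - a * q ^ j)) k]
  simp [pow_succ, mul_comm, mul_assoc, mul_left_comm]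

lemma qPoch_q_ne_zero {q : ℝ} (hq : 0 < q) (hq1 : q ≠ 1) (k : ℕ) : qPoch q q k ≠ 0 := by
  unfold qPoch
  apply Finset.prod_ne_zero_iff.mpr
  intro j _
  have : q * q ^ j = q ^ (j+1 : ℝ) := by
    rw [Real.rpow_add hq, Real.rpow_one, Real.rpow_natCast]; ring
  rw [this]
  have : q ^ (j+1:ℝ) ≠ 1 := rpow_ne_one' hq hq1 (by positivity)
  intro h; apply this; linarith

lemma qPoch_qN_ne_zero {q : ℝ} (hq : 0 < q) (hq1 : q ≠ 1) {N k : ℕ} (hk : k ≤ N) :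
    qPoch (q ^ (-(N:ℝ))) q k ≠ 0 := by
  unfold qPoch
  apply Finset.prod_ne_zero_iff.mpr
  intro j hj
  have hj' : j < N := lt_of_lt_of_le (Finset.mem_range.mp hj) hk
  have : q ^ (-(N:ℝ)) * q ^ j = q ^ ((j:ℝ) - N) := by
    rw [Real.rpow_sub hq, Real.rpow_natCast, Real.rpow_neg hq.le, Real.rpow_natCast]; ring
  rw [this]
  have hne : ((j:ℝ) - N) ≠ 0 := by
    have : (j:ℝ) < N := by exact_mod_cast hj'
    linarith
  have := rpow_ne_one' hq hq1 hne
  intro h; apply this; linarith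

lemma keyid (v w Q q : ℝ) (hv : v ≠ 0) (hw : w ≠ 0) (hq1 : (1:ℝ) - q ≠ 0) :
    ((1 - w⁻¹)/(1-q)) * (1 - w*Q) * (1-v) - (v * w⁻¹) * ((1 - v⁻¹)/(1-q)) * (1 - v*Q) * (1-w)
    = ((1 - v*w⁻¹)/(1-q)) * Q * ((1-v)*(1-w)) := by
  field_simp
  ring

lemma coreid (q α : ℝ) (hq : 0 < q) (hq1 : q ≠ 1) (x : ℤ)
    (hC1 : (1:ℝ) - q ^ (α - (x:ℝ)) ≠ 0) (k : ℕ) :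
    qnum q ((x:ℝ) - α) * qPoch (q ^ (-(x:ℝ))) q k * qPoch (q ^ (α + 1 - (x:ℝ))) q k
      - q ^ (-α) * qnum q (x:ℝ) * qPoch (q ^ (-((x:ℝ) - 1))) q k * qPoch (q ^ (α - (x:ℝ))) q k
    = qnum q (-α) * qPoch (q ^ (-(x:ℝ))) q k * qPoch (q ^ (α - (x:ℝ))) q k * q ^ k := by
  have hv : q ^ (-(x:ℝ)) ≠ 0 := (Real.rpow_pos_of_pos hq _).ne'
  have hw : q ^ (α - (x:ℝ)) ≠ 0 := (Real.rpow_pos_of_pos hq _).ne'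
  have e1 : q ^ ((x:ℝ) - α) = (q ^ (α - (x:ℝ)))⁻¹ := by
    rw [← Real.rpow_neg hq.le]; congr 1; ring
  have e2 : q ^ ((x:ℝ)) = (q ^ (-(x:ℝ)))⁻¹ := by
    rw [← Real.rpow_neg hq.le]; congr 1; ring
  have e3 : q ^ (-α) = q ^ (-(x:ℝ)) * (q ^ (α - (x:ℝ)))⁻¹ := by
    rw [← Real.rpow_neg hq.le, ← Real.rpow_add hq]; congr 1; ring
  have e4 : q ^ (-((x:ℝ) - 1)) = q ^ (-(x:ℝ)) * q := by
    rw [show -((x:ℝ) - 1) = -(x:ℝ) + 1 by ring, Real.rpow_add hq, Real.rpow_one]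
  have e5 : q ^ (α + 1 - (x:ℝ)) = q ^ (α - (x:ℝ)) * q := by
    rw [show α + 1 - (x:ℝ) = (α - (x:ℝ)) + 1 by ring, Real.rpow_add hq, Real.rpow_one]
  by_cases hx : (x:ℝ) = 0
  · simp only [qnum, hx, neg_zero, Real.rpow_zero, sub_zero, zero_sub, sub_self, zero_div,
      mul_zero, zero_mul, sub_zero]
    rcases k with _ | k
    · simp [qPoch]
    · have hzero : qPoch (1:ℝ) q (k+1) = 0 := by
        apply Finset.prod_eq_zero (Finset.mem_range.mpr (Nat.succ_pos k))
        simp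
      rw [hzero]; ring
  · have h1v : (1:ℝ) - q ^ (-(x:ℝ)) ≠ 0 := by
      have := rpow_ne_one' hq hq1 (neg_ne_zero.mpr hx)
      intro h; apply this; linarith
    have hqq : (1:ℝ) - q ≠ 0 := by intro h; apply hq1; linarith
    have hP1 := poch_shift (q ^ (-(x:ℝ))) q k
    have hP2 := poch_shift (q ^ (α - (x:ℝ))) q k
    have hK := keyid (q ^ (-(x:ℝ))) (q ^ (α - (x:ℝ))) (q ^ k) q hv hw hqq
    simp only [qnum, e1, e2, e3, e4, e5]
    apply mul_left_cancel₀ (mul_ne_zero h1v hC1)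
    linear_combination (qPoch (q ^ (-(x:ℝ))) q k * qPoch (q ^ (α - (x:ℝ))) q k) * hK
      + ((1 - (q ^ (α - (x:ℝ)))⁻¹)/(1-q) * qPoch (q ^ (-(x:ℝ))) q k * (1 - q ^ (-(x:ℝ)))) * hP2
      - (q ^ (-(x:ℝ)) * (q ^ (α - (x:ℝ)))⁻¹ * ((1 - (q ^ (-(x:ℝ)))⁻¹)/(1-q))
          * qPoch (q ^ (α - (x:ℝ))) q k * (1 - q ^ (α - (x:ℝ)))) * hP1

lemma sum_helper {s : Finset ℕ} {f g h : ℕ → ℝ} {a b c : ℝ}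
    (H : ∀ k ∈ s, a * f k - b * g k = c * h k) :
    a * (∑ k ∈ s, f k) - b * (∑ k ∈ s, g k) = c * ∑ k ∈ s, h k := by
  rw [Finset.mul_sum, Finset.mul_sum, Finset.mul_sum, ← Finset.sum_sub_distrib]
  exact Finset.sum_congr rfl H


/-- the contiguity relation
`X^{(α,β)} U_n(x;α,β,N;q) = [-α]_q U_n(x;α+1,β,N;q)`, where
`X f(x) = [x-α]_q f(x) - q^{-α} [x]_q f(x-1)` and `x` ranges over `{0,...,N}`. -/
theorem X_contiguity (q α β : ℝ) (N n : ℕ) (hq : 0 < q) (hq1 : q ≠ 1)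
    (hN : 0 < N) (hn : n ≤ N)
    (hgen1 : qPoch (q ^ (-(n : ℝ) - β)) q n ≠ 0)
    (hgen2 : ∀ (x : ℤ) (k : ℕ), qPoch (q ^ (α - (x : ℝ))) q k ≠ 0)
    (hgen3 : ∀ (x : ℤ) (k : ℕ), qPoch (q ^ (α + 1 - (x : ℝ))) q k ≠ 0)
    (x : ℤ) (hx0 : 0 ≤ x) (hxN : x ≤ N) :
    qnum q ((x : ℝ) - α) * Ufun q α β N n (x : ℝ) -
        q ^ (-α) * qnum q (x : ℝ) * Ufun q α β N n ((x : ℝ) - 1) =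
      qnum q (-α) * Ufun q (α + 1) β N n (x : ℝ) := by
  have H : ∀ k ∈ Finset.range (n + 1),
      qnum q ((x:ℝ) - α) *
        (qPoch (q ^ (-(n:ℝ))) q k * qPoch (q ^ ((n:ℝ) + β - N)) q k *
          qPoch (q ^ (-(x:ℝ))) q k * q ^ ((k:ℝ) * (α - β)) /
          (qPoch q q k * qPoch (q ^ (-(N:ℝ))) q k * qPoch (q ^ (α - (x:ℝ))) q k))
      - (q ^ (-α) * qnum q (x:ℝ)) *
        (qPoch (q ^ (-(n:ℝ))) q k * qPoch (q ^ ((n:ℝ) + β - N)) q k *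
          qPoch (q ^ (-((x:ℝ) - 1))) q k * q ^ ((k:ℝ) * (α - β)) /
          (qPoch q q k * qPoch (q ^ (-(N:ℝ))) q k * qPoch (q ^ (α - ((x:ℝ) - 1))) q k))
      = qnum q (-α) *
        (qPoch (q ^ (-(n:ℝ))) q k * qPoch (q ^ ((n:ℝ) + β - N)) q k *
          qPoch (q ^ (-(x:ℝ))) q k * q ^ ((k:ℝ) * (α + 1 - β)) /
          (qPoch q q k * qPoch (q ^ (-(N:ℝ))) q k * qPoch (q ^ (α + 1 - (x:ℝ))) q k)) := by
    intro k hk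
    have hk' : k ≤ N := le_trans (Nat.lt_succ_iff.mp (Finset.mem_range.mp hk)) hn
    have hDq : qPoch q q k ≠ 0 := qPoch_q_ne_zero hq hq1 k
    have hDN : qPoch (q ^ (-(N:ℝ))) q k ≠ 0 := qPoch_qN_ne_zero hq hq1 hk'
    have hC : qPoch (q ^ (α - (x:ℝ))) q k ≠ 0 := hgen2 x k
    have hC' : qPoch (q ^ (α + 1 - (x:ℝ))) q k ≠ 0 := hgen3 x k
    have hC1 : (1:ℝ) - q ^ (α - (x:ℝ)) ≠ 0 := by
      have := hgen2 x 1
      simpa [qPoch] using this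
    have eE : α - ((x:ℝ) - 1) = α + 1 - (x:ℝ) := by ring
    rw [eE]
    have eM : q ^ ((k:ℝ) * (α + 1 - β)) = q ^ ((k:ℝ) * (α - β)) * q ^ k := by
      rw [← Real.rpow_natCast q k, ← Real.rpow_add hq]; congr 1; ring
    rw [eM]
    have core := coreid q α hq hq1 x hC1 k
    have h2 : (qnum q ((x:ℝ) - α) * qPoch (q ^ (-(x:ℝ))) q k) / qPoch (q ^ (α - (x:ℝ))) q k
        - (q ^ (-α) * qnum q (x:ℝ) * qPoch (q ^ (-((x:ℝ) - 1))) q k) /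
            qPoch (q ^ (α + 1 - (x:ℝ))) q k
        = (qnum q (-α) * qPoch (q ^ (-(x:ℝ))) q k * q ^ k) /
            qPoch (q ^ (α + 1 - (x:ℝ))) q k := by
      rw [div_sub_div _ _ hC hC', div_eq_div_iff (mul_ne_zero hC hC') hC']
      linear_combination qPoch (q ^ (α + 1 - (x:ℝ))) q k * core
    linear_combination (qPoch (q ^ (-(n:ℝ))) q k * qPoch (q ^ ((n:ℝ) + β - N)) q k *
      q ^ ((k:ℝ) * (α - β)) / (qPoch q q k * qPoch (q ^ (-(N:ℝ))) q k)) * h2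
  have hsum := sum_helper H
  unfold Ufun
  linear_combination (qPoch (q ^ (-(N:ℝ))) q n / qPoch (q ^ (-(n:ℝ) - β)) q n) * hsum
end

section
/- The difference operators X and Z satisfy the q-commutation relation X Z - q Z X = -Z² - Z - (1-q) X, when acting on functions f : ℤ → ℝ (with parameters generic so that no denominators [x-α]_q vanish on the relevant grid). -/
/-- `X f(x) = [x-α]_q f(x) - q^{-α} [x]_q f(x-1)`. -/
noncomputable def opX (q α : ℝ) (f : ℤ → ℝ) (x : ℤ) : ℝ :=
  qnum q ((x : ℝ) - α) * f x - q ^ (-α) * qnum q (x : ℝ) * f (x - 1)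

/-- `Z f(x) = ([-x]_q/[α-x]_q) f(x-1) - f(x)`. -/
noncomputable def opZ (q α : ℝ) (f : ℤ → ℝ) (x : ℤ) : ℝ :=
  (qnum q (-(x : ℝ)) / qnum q (α - (x : ℝ))) * f (x - 1) - f x

/-!
Both `X` and `Z` are lower bidiagonal: `(T f)(x) = c(x) f(x) + d(x) f(x-1)`. Composing two such
operators gives a combination of `f x`, `f (x-1)`, `f (x-2)`, so the relation splits into three
coefficient identities. The one on `f x` is trivial, the one on `f (x-1)` is the recurrence
`[y]_q = 1 + q [y-1]_q`, and the one on `f (x-2)` is a rational identity in `q^x` and `q^α`.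
-/

def bidiag (c d : ℤ → ℝ) (f : ℤ → ℝ) (x : ℤ) : ℝ :=
  c x * f x + d x * f (x - 1)

theorem bidiag_bidiag (c d c' d' f : ℤ → ℝ) (x : ℤ) :
    bidiag c d (bidiag c' d' f) x =
      c x * c' x * f x + (c x * d' x + d x * c' (x - 1)) * f (x - 1)
        + d x * d' (x - 1) * f (x - 1 - 1) := by
  simp only [bidiag]
  ring

theorem opX_eq_bidiag (q α : ℝ) :
    opX q α = bidiag (fun x => qnum q ((x : ℝ) - α)) (fun x => -(q ^ (-α) * qnum q x)) := by
  ext f x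
  simp only [opX, bidiag]
  ring

theorem opZ_eq_bidiag (q α : ℝ) :
    opZ q α = bidiag (fun _ => -1) (fun x => qnum q (-(x : ℝ)) / qnum q (α - x)) := by
  ext f x
  simp only [opZ, bidiag]
  ring

theorem qnum_eq_one_add_mul_qnum_sub_one {q : ℝ} (hq : 0 < q) (hq1 : q ≠ 1) (y : ℝ) :
    qnum q y = 1 + q * qnum q (y - 1) := by
  have h1q : 1 - q ≠ 0 := sub_ne_zero.mpr hq1.symm
  simp only [qnum, Real.rpow_sub hq, Real.rpow_one]
  field_simp
  ring

theorem qnum_ratio_identity {q α : ℝ} (hq : 0 < q) (hq1 : q ≠ 1) (y : ℝ)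
    (hy : qnum q (α - y) ≠ 0) (hy1 : qnum q (α - (y - 1)) ≠ 0) :
    qnum q (-(y - 1)) / qnum q (α - (y - 1)) * (-(q ^ (-α) * qnum q y) + qnum q (-y) / qnum q (α - y))
      = q * (qnum q (-y) / qnum q (α - y)) * (-(q ^ (-α) * qnum q (y - 1))) := by
  have h1q : 1 - q ≠ 0 := sub_ne_zero.mpr hq1.symm
  have hu : q ^ y ≠ 0 := (Real.rpow_pos_of_pos hq y).ne'
  have hb : q ^ α ≠ 0 := (Real.rpow_pos_of_pos hq α).ne'
  simp only [qnum, neg_sub, Real.rpow_sub hq, Real.rpow_neg hq.le, Real.rpow_one] at hy hy1 ⊢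
  generalize q ^ y = u at *
  generalize q ^ α = b at *
  have hub : u - b ≠ 0 := by
    contrapose! hy
    rw [show b = u by linarith, div_self hu, sub_self, zero_div]
  have hubq : u - q * b ≠ 0 := by
    contrapose! hy1
    rw [div_div_eq_mul_div, show b * q = u by linarith, div_self hu, sub_self, zero_div]
  field_simp
  ring

/-- the q-commutation relation `XZ - qZX = -Z² - Z - (1-q)X` on
functions `f : ℤ → ℝ`. -/
theorem XZ_q_commutation (q α : ℝ) (hq : 0 < q) (hq1 : q ≠ 1)
    (hα : ∀ x : ℤ, qnum q (α - (x : ℝ)) ≠ 0)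
    (f : ℤ → ℝ) (x : ℤ) :
    opX q α (opZ q α f) x - q * opZ q α (opX q α f) x =
      -(opZ q α (opZ q α f) x) - opZ q α f x - (1 - q) * opX q α f x := by
  have hrec := qnum_eq_one_add_mul_qnum_sub_one hq hq1 ((x : ℝ) - α)
  have hratio := qnum_ratio_identity hq hq1 (x : ℝ) (hα x) (by exact_mod_cast hα (x - 1))
  rw [opX_eq_bidiag, opZ_eq_bidiag, bidiag_bidiag, bidiag_bidiag, bidiag_bidiag]
  simp only [bidiag]
  push_cast
  rw [show (x : ℝ) - 1 - α = (x : ℝ) - α - 1 by ring]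
  linear_combination (qnum q (-(x : ℝ)) / qnum q (α - x) * f (x - 1)) * hrec
    + f (x - 1 - 1) * hratio
end
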